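/- arXiv:1407.2566 — 7 statements merged into one kernel-verified Lean document; each statement's English description precedes it below -/
import Mathlib

section
/- If T is a positive linear map on Hermitian operators of a finite-dimensional Hilbert space and W is a T-invariant set of positive semidefinite operators, then for every positive semidefinite X with supp(X) ⊆ supp(W), one has supp(T(X)) ⊆ supp(W). -/
open Matrix
open scoped ComplexOrder

/-- The support `(ker X)ᗮ` of an operator. -/
noncomputable def msupp {n : Type*} [Fintype n] [DecidableEq n]
    (X : Matrix n n ℂ) : Submodule ℂ (EuclideanSpace ℂ n) :=
  (LinearMap.ker (Matrix.toEuclideanLin X))ᗮ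

/-- The support of a set of operators: the span of the supports of its elements. -/
noncomputable def wsupp {n : Type*} [Fintype n] [DecidableEq n]
    (W : Set (Matrix n n ℂ)) : Submodule ℂ (EuclideanSpace ℂ n) :=
  ⨆ η ∈ W, msupp η

/-!
In finite dimension `supp W` is already the support of a finite sum `Y` of elements of `W`.
A PSD `X` supported in `supp Y` satisfies `X ≤ c • Y` for some `c`: writing `X = A⋆A`,
`Y = C⋆C`, the kernel inclusion `ker C ⊆ ker A` gives `A = B C`, and then
`X = C⋆(B⋆B)C ≤ ‖B⋆B‖ • C⋆C`. Positivity of `T` turns this into `T X ≤ c • T Y`, so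
`supp (T X) ⊆ supp (T Y)`, which lies in the span of the supports of the `T η ∈ W`.
-/

open scoped MatrixOrder

theorem LinearMap.exists_comp_eq_of_ker_le {K V V' V'' : Type*} [DivisionRing K]
    [AddCommGroup V] [Module K V] [AddCommGroup V'] [Module K V'] [AddCommGroup V'']
    [Module K V''] (q : V →ₗ[K] V') (p : V →ₗ[K] V'') (h : ker q ≤ ker p) :
    ∃ b : V' →ₗ[K] V'', b ∘ₗ q = p := by
  obtain ⟨b, hb⟩ :=
    exists_extend ((ker q).liftQ p h ∘ₗ q.quotKerEquivRange.symm.toLinearMap)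
  refine ⟨b, ext fun x => ?_⟩
  have := LinearMap.congr_fun hb ⟨q x, mem_range_self q x⟩
  rwa [comp_apply, comp_apply, LinearEquiv.coe_coe, quotKerEquivRange_symm_apply_image,
    Submodule.mkQ_apply, Submodule.liftQ_apply] at this

namespace Matrix

theorem exists_eq_mul_of_mulVec_eq_zero {K m n p : Type*} [Field K] [Fintype n]
    [DecidableEq n] [Fintype p] [DecidableEq p] {A : Matrix m n K} {C : Matrix p n K}
    (h : ∀ v, C *ᵥ v = 0 → A *ᵥ v = 0) : ∃ B : Matrix m p K, A = B * C := by
  obtain ⟨b, hb⟩ := LinearMap.exists_comp_eq_of_ker_le (toLin' C) (toLin' A) fun v hv => by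
    simpa using h v (by simpa using hv)
  exact ⟨toLin'.symm b, toLin'.injective (by rw [toLin'_mul, LinearEquiv.apply_symm_apply, hb])⟩

variable {n : Type*} [Fintype n] [DecidableEq n]

open scoped Matrix.Norms.L2Operator in
theorem exists_le_smul_of_mulVec_eq_zero {X Y : Matrix n n ℂ} (hX : 0 ≤ X) (hY : 0 ≤ Y)
    (h : ∀ v, Y *ᵥ v = 0 → X *ᵥ v = 0) : ∃ c : ℝ, X ≤ c • Y := by
  obtain ⟨A, rfl⟩ := CStarAlgebra.nonneg_iff_eq_star_mul_self.mp hX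
  obtain ⟨C, rfl⟩ := CStarAlgebra.nonneg_iff_eq_star_mul_self.mp hY
  simp only [star_eq_conjTranspose, conjTranspose_mul_self_mulVec_eq_zero] at h
  obtain ⟨B, rfl⟩ := exists_eq_mul_of_mulVec_eq_zero h
  refine ⟨‖star B * B‖, ?_⟩
  calc star (B * C) * (B * C) = star C * (star B * B) * C := by simp only [star_mul, mul_assoc]
    _ ≤ ‖star B * B‖ • (star C * C) := CStarAlgebra.star_left_conjugate_le_norm_smul

end Matrix

section Support

variable {n : Type*} [Fintype n] [DecidableEq n]

theorem mem_ker_toEuclideanLin_iff {A : Matrix n n ℂ} {x : EuclideanSpace ℂ n} :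
    x ∈ LinearMap.ker (toEuclideanLin A) ↔ A *ᵥ x.ofLp = 0 :=
  WithLp.toLp_eq_zero 2

theorem msupp_le_msupp_iff {A B : Matrix n n ℂ} :
    msupp A ≤ msupp B ↔ ∀ v, B *ᵥ v = 0 → A *ᵥ v = 0 := by
  rw [msupp, msupp, Submodule.orthogonal_le_orthogonal_iff]
  simp only [SetLike.le_def, mem_ker_toEuclideanLin_iff]
  exact ⟨fun h v => h (x := WithLp.toLp 2 v), fun h x => h x.ofLp⟩

theorem msupp_zero : msupp (0 : Matrix n n ℂ) = ⊥ := by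
  simp [msupp]

theorem msupp_add_le (A B : Matrix n n ℂ) : msupp (A + B) ≤ msupp A ⊔ msupp B := by
  rw [msupp, msupp, msupp, ← Submodule.orthogonal_orthogonal (_ ⊔ _), ← Submodule.inf_orthogonal,
    Submodule.orthogonal_orthogonal, Submodule.orthogonal_orthogonal]
  refine Submodule.orthogonal_le fun x ⟨hA, hB⟩ => ?_
  rw [SetLike.mem_coe, LinearMap.mem_ker] at hA hB
  rw [LinearMap.mem_ker, map_add, LinearMap.add_apply, hA, hB, add_zero]

theorem msupp_sum_le {ι : Type*} (s : Finset ι) (A : ι → Matrix n n ℂ) :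
    msupp (∑ i ∈ s, A i) ≤ ⨆ i ∈ s, msupp (A i) :=
  Finset.sum_induction A (fun M => msupp M ≤ ⨆ i ∈ s, msupp (A i))
    (fun _ _ hA hB => (msupp_add_le _ _).trans (sup_le hA hB)) (by simp [msupp_zero])
    fun i hi => le_biSup (fun i => msupp (A i)) hi

theorem msupp_smul_le (c : ℝ) (A : Matrix n n ℂ) : msupp (c • A) ≤ msupp A :=
  msupp_le_msupp_iff.2 fun v hv => by rw [smul_mulVec, hv, smul_zero]

theorem msupp_mono {A B : Matrix n n ℂ} (hA : 0 ≤ A) (hAB : A ≤ B) : msupp A ≤ msupp B := by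
  refine msupp_le_msupp_iff.2 fun v hv => (hA.posSemidef.dotProduct_mulVec_zero_iff v).1 ?_
  have hBA := (Matrix.le_iff.1 hAB).dotProduct_mulVec_nonneg v
  rw [sub_mulVec, hv, zero_sub, dotProduct_neg, neg_nonneg] at hBA
  exact le_antisymm hBA (hA.posSemidef.dotProduct_mulVec_nonneg v)

theorem exists_finset_subset_wsupp_le (W : Set (Matrix n n ℂ)) :
    ∃ s : Finset (Matrix n n ℂ), ↑s ⊆ W ∧ wsupp W ≤ ⨆ η ∈ s, msupp η := by
  have hW : IsCompactElement (wsupp W) :=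
    (Submodule.fg_iff_compact _).1 (IsNoetherian.noetherian _)
  obtain ⟨t, ht⟩ := CompleteLattice.IsCompactElement.exists_finset_of_le_iSup _ hW
    (fun η : W => msupp (η : Matrix n n ℂ)) (by rw [wsupp, iSup_subtype'])
  refine ⟨t.map (Function.Embedding.subtype _), by simp, ht.trans ?_⟩
  exact iSup₂_le fun η hη => le_biSup msupp (Finset.mem_map_of_mem _ hη)

end Support

/-- If `T` is a positive linear map and `W` a `T`-invariant set of PSD operators, then
any PSD `X` with `supp X ⊆ supp W` satisfies `supp (T X) ⊆ supp W`. -/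
theorem stmt_1 {d : ℕ}
    (T : Matrix (Fin d) (Fin d) ℂ →ₗ[ℂ] Matrix (Fin d) (Fin d) ℂ)
    (hpos : ∀ X : Matrix (Fin d) (Fin d) ℂ, X.PosSemidef → (T X).PosSemidef)
    (W : Set (Matrix (Fin d) (Fin d) ℂ))
    (hWpsd : ∀ Y ∈ W, Y.PosSemidef)
    (hWinv : ∀ Y ∈ W, T Y ∈ W)
    (X : Matrix (Fin d) (Fin d) ℂ) (hX : X.PosSemidef)
    (hsupp : msupp X ≤ wsupp W) :
    msupp (T X) ≤ wsupp W := by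
  have hTmono : Monotone T :=
    (monotone_iff_map_nonneg T).2 fun A hA => (hpos A hA.posSemidef).nonneg
  obtain ⟨s, hsW, hWs⟩ := exists_finset_subset_wsupp_le W
  have hs_nonneg : ∀ η ∈ s, 0 ≤ η := fun η hη => (hWpsd η (hsW hη)).nonneg
  set Y := ∑ η ∈ s, η
  have hWY : wsupp W ≤ msupp Y := hWs.trans <| iSup₂_le fun η hη =>
    msupp_mono (hs_nonneg η hη) (Finset.single_le_sum hs_nonneg hη)
  obtain ⟨c, hXY⟩ := exists_le_smul_of_mulVec_eq_zero hX.nonneg (Finset.sum_nonneg hs_nonneg)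
    (msupp_le_msupp_iff.1 (hsupp.trans hWY))
  calc msupp (T X) ≤ msupp (c • T Y) := by
        refine msupp_mono (hpos X hX).nonneg ?_
        simpa only [LinearMap.map_smul_of_tower] using hTmono hXY
    _ ≤ msupp (T Y) := msupp_smul_le c _
    _ ≤ ⨆ η ∈ s, msupp (T η) := by rw [map_sum]; exact msupp_sum_le s T
    _ ≤ wsupp W := iSup₂_le fun η hη => le_biSup msupp (hWinv η (hsW hη))
end

section
/- Let T(ρ) = Σ_k M_k ρ M_k† be a completely positive map on a finite-dimensional Hilbert space H = H_S ⊕ H_R. Then H_S is invariant for T (i.e., every PSD operator with support in H_S is mapped to one with support in H_S) if and only if, in the block decomposition induced by H_S ⊕ H_R, every Kraus operator M_k has zero lower-left block, i.e., M_k = [[M_{k,S}, M_{k,P}],[0, M_{k,R}]]. -/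
/-!
Write `P = Π_S`. In finite dimensions `(ker X)ᗮ ≤ range P` iff `ker P ≤ ker X` iff `X * P = X`,
so invariance says that `ρ * P = ρ` is preserved by `T`. If every `(1 - P) M_k P` vanishes, then
`P M_kᴴ P = P M_kᴴ` and `ρ = ρ P` propagates through each term `M_k ρ M_kᴴ`. Conversely, feeding in
`ρ = P` gives `0 = (1 - P) T(P) (1 - P) = ∑_k A_k A_kᴴ` with `A_k = (1 - P) M_k P`, a sum of positive
semidefinite matrices, so every `A_k` vanishes; and `A_k` is the lower-left block of `M_k`.
-/

open Matrix
open scoped ComplexOrder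

/-- The subspace `H_S` of `H = H_S ⊕ H_R`: the range of the orthogonal projection
`Π_S = [[1,0],[0,0]]`. -/
noncomputable def HSsub (a b : ℕ) : Submodule ℂ (EuclideanSpace ℂ (Fin a ⊕ Fin b)) :=
  LinearMap.range (Matrix.toEuclideanLin
    (Matrix.fromBlocks 1 0 0 0 : Matrix (Fin a ⊕ Fin b) (Fin a ⊕ Fin b) ℂ))

section

variable {𝕜 n ι : Type*} [RCLike 𝕜] [Fintype n] [Fintype ι]

open scoped MatrixOrder in
theorem sum_mul_conjTranspose_eq_zero_iff {m : Type*} [Fintype m] (A : ι → Matrix m n 𝕜) :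
    ∑ k, A k * (A k)ᴴ = 0 ↔ ∀ k, A k = 0 := by
  rw [Finset.sum_eq_zero_iff_of_nonneg fun k _ => (posSemidef_self_mul_conjTranspose (A k)).nonneg]
  simp only [Finset.mem_univ, true_implies, self_mul_conjTranspose_eq_zero]

variable [DecidableEq n] {P : Matrix n n 𝕜}

theorem conjTranspose_one_sub_mul_mul (hP : P.IsHermitian) (A : Matrix n n 𝕜) :
    ((1 - P) * A * P)ᴴ = P * Aᴴ * (1 - P) := by
  simp only [conjTranspose_mul, conjTranspose_sub, conjTranspose_one, hP.eq, mul_assoc]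

theorem kraus_preserves_range_iff (hP : P.IsHermitian) (hP' : IsIdempotentElem P)
    (M : ι → Matrix n n 𝕜) :
    (∀ ρ : Matrix n n 𝕜, ρ.PosSemidef → ρ * P = ρ →
        (∑ k, M k * ρ * (M k)ᴴ) * P = ∑ k, M k * ρ * (M k)ᴴ) ↔
      ∀ k, (1 - P) * M k * P = 0 := by
  constructor
  · intro h
    have hPpsd : P.PosSemidef := by
      simpa only [hP.eq, hP'.eq] using posSemidef_conjTranspose_mul_self P
    rw [← sum_mul_conjTranspose_eq_zero_iff]
    calc ∑ k, (1 - P) * M k * P * ((1 - P) * M k * P)ᴴ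
        = (1 - P) * ((∑ k, M k * P * (M k)ᴴ) - (∑ k, M k * P * (M k)ᴴ) * P) := by
          simp only [conjTranspose_one_sub_mul_mul hP, Finset.mul_sum, Finset.sum_mul,
            ← Finset.sum_sub_distrib]
          refine Finset.sum_congr rfl fun k _ => ?_
          rw [← mul_one_sub]
          simp only [mul_assoc]
          rw [← mul_assoc P P, hP'.eq]
      _ = 0 := by rw [h P hPpsd hP'.eq, sub_self, mul_zero]
  · intro h ρ _ hρ
    rw [Finset.sum_mul]
    refine Finset.sum_congr rfl fun k _ => ?_
    have hMP : P * (M k)ᴴ * P = P * (M k)ᴴ := by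
      have := congrArg conjTranspose (h k)
      rwa [conjTranspose_one_sub_mul_mul hP, conjTranspose_zero, mul_one_sub, sub_eq_zero,
        eq_comm] at this
    calc M k * ρ * (M k)ᴴ * P = M k * (ρ * P) * (M k)ᴴ * P := by rw [hρ]
      _ = M k * ρ * (P * (M k)ᴴ * P) := by simp only [mul_assoc]
      _ = M k * ρ * (M k)ᴴ := by rw [hMP, ← mul_assoc (M k * ρ), mul_assoc (M k), hρ]

theorem one_sub_fromBlocks_one_mul_mul {m : Type*} [Fintype m] [DecidableEq m]
    (M : Matrix (m ⊕ n) (m ⊕ n) 𝕜) :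
    (1 - fromBlocks 1 0 0 0) * M * fromBlocks 1 0 0 0 = fromBlocks 0 0 M.toBlocks₂₁ 0 := by
  have hQ : (1 : Matrix (m ⊕ n) (m ⊕ n) 𝕜) - fromBlocks 1 0 0 0 = fromBlocks 0 0 0 1 := by
    rw [← fromBlocks_one, sub_eq_add_neg, fromBlocks_neg, fromBlocks_add]
    simp
  rw [hQ, ← fromBlocks_toBlocks M]
  simp [fromBlocks_multiply]

end

theorem msupp_le_range_iff {n : Type*} [Fintype n] [DecidableEq n] {P : Matrix n n ℂ}
    (hP : P.IsHermitian) (hP' : IsIdempotentElem P) (X : Matrix n n ℂ) :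
    msupp X ≤ LinearMap.range (toEuclideanLin P) ↔ X * P = X := by
  have hPlin : IsIdempotentElem (toEuclideanLin P) := by
    have := congrArg toEuclideanLin hP'.eq
    rwa [toLpLin_mul_same] at this
  rw [msupp, Submodule.orthogonal_le_iff_orthogonal_le,
    (isSymmetric_toEuclideanLin_iff.mpr hP).orthogonal_range,
    ← LinearMap.IsIdempotentElem.comp_eq_left_iff hPlin, ← toLpLin_mul_same,
    toEuclideanLin.injective.eq_iff]

/-- `H_S` is invariant for the CP map `T(ρ) = Σ_k M_k ρ M_k†` iff every Kraus operator
has vanishing lower-left block. -/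
theorem stmt_2 {a b K : ℕ}
    (M : Fin K → Matrix (Fin a ⊕ Fin b) (Fin a ⊕ Fin b) ℂ) :
    (∀ ρ : Matrix (Fin a ⊕ Fin b) (Fin a ⊕ Fin b) ℂ, ρ.PosSemidef →
        msupp ρ ≤ HSsub a b → msupp (∑ k, M k * ρ * (M k)ᴴ) ≤ HSsub a b) ↔
      ∀ k, (M k).toBlocks₂₁ = 0 := by
  set P : Matrix (Fin a ⊕ Fin b) (Fin a ⊕ Fin b) ℂ := fromBlocks 1 0 0 0 with hPdef
  have hP : P.IsHermitian := by simp [P, IsHermitian, fromBlocks_conjTranspose]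
  have hP' : IsIdempotentElem P := by simp [P, IsIdempotentElem, fromBlocks_multiply]
  have hHS : HSsub a b = LinearMap.range (toEuclideanLin P) := rfl
  simp only [hHS, msupp_le_range_iff hP hP']
  rw [kraus_preserves_range_iff hP hP']
  simp only [hPdef, one_sub_fromBlocks_one_mul_mul]
  simp [← fromBlocks_zero, fromBlocks_inj]
end

section
/- Let T be a completely positive map on H = H_S ⊕ H_R. The subspace H_S is invariant for T if and only if the operator subspace 𝔥_S ⊕ 𝔥_{SR} (Hermitian operators whose lower-right block with respect to the decomposition is zero) is invariant under T. -/
open Matrix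
open scoped ComplexOrder

/-!
Write every Kraus operator `M` of `T` in block form. Feeding the projection onto `H_S` into the
invariance of `H_S` gives `∑ M₂₁ M₂₁ᴴ = 0`, so all lower-left blocks vanish, and then the
lower-right block of `M A Mᴴ` is `M₂₂ A₂₂ M₂₂ᴴ`. Conversely, a positive semidefinite operator is
supported in `H_S` iff its lower-right block vanishes, because a positive semidefinite matrix with
a zero diagonal entry has a zero column; and `T` preserves positivity.
-/

namespace Matrix

lemma toBlocks₂₂_sum {m n α ι : Type*} [AddCommMonoid α] [Fintype ι]
    (f : ι → Matrix (m ⊕ n) (m ⊕ n) α) : (∑ k, f k).toBlocks₂₂ = ∑ k, (f k).toBlocks₂₂ := by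
  ext i j
  simp [toBlocks₂₂, sum_apply]

section Blocks

variable {m n α : Type*} [Fintype m] [Fintype n] [CommRing α] [StarRing α]

lemma toBlocks₂₂_mul_fromBlocks_one_mul_conjTranspose [DecidableEq m]
    (M : Matrix (m ⊕ n) (m ⊕ n) α) :
    (M * fromBlocks 1 0 0 0 * Mᴴ).toBlocks₂₂ = M.toBlocks₂₁ * M.toBlocks₂₁ᴴ := by
  conv_lhs => rw [← fromBlocks_toBlocks M]
  simp [fromBlocks_conjTranspose, fromBlocks_multiply]

lemma toBlocks₂₂_mul_mul_conjTranspose_of_toBlocks₂₁_eq_zero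
    {M : Matrix (m ⊕ n) (m ⊕ n) α} (hM : M.toBlocks₂₁ = 0) (A : Matrix (m ⊕ n) (m ⊕ n) α) :
    (M * A * Mᴴ).toBlocks₂₂ = M.toBlocks₂₂ * A.toBlocks₂₂ * M.toBlocks₂₂ᴴ := by
  conv_lhs => rw [← fromBlocks_toBlocks M, ← fromBlocks_toBlocks A, hM]
  simp [fromBlocks_conjTranspose, fromBlocks_multiply]

end Blocks

variable {m n 𝕜 : Type*} [Fintype m] [Fintype n] [RCLike 𝕜]

lemma PosSemidef.col_eq_zero_of_diag_eq_zero [DecidableEq n] {A : Matrix n n 𝕜}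
    (hA : A.PosSemidef) {j : n} (hj : A.diag j = 0) : A.col j = 0 := by
  rw [← mulVec_single_one, ← hA.dotProduct_mulVec_zero_iff]
  simpa [mulVec_single_one] using hj

lemma PosSemidef.sum_mul_mul_conjTranspose {ι : Type*} [Fintype ι] {A : Matrix n n 𝕜}
    (hA : A.PosSemidef) (M : ι → Matrix m n 𝕜) : (∑ k, M k * A * (M k)ᴴ).PosSemidef :=
  posSemidef_sum _ fun k _ => hA.mul_mul_conjTranspose_same (M k)

lemma eq_zero_of_sum_mul_conjTranspose_self_eq_zero {ι : Type*} [Fintype ι]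
    {N : ι → Matrix m n 𝕜} (h : ∑ k, N k * (N k)ᴴ = 0) (k : ι) : N k = 0 := by
  have htrace : ∑ k, (N k * (N k)ᴴ).trace = 0 := by rw [← trace_sum, h, trace_zero]
  rw [Fintype.sum_eq_zero_iff_of_nonneg
    fun k => (posSemidef_self_mul_conjTranspose (N k)).trace_nonneg] at htrace
  exact trace_mul_conjTranspose_self_eq_zero_iff.mp (congrFun htrace k)

lemma posSemidef_fromBlocks_one_zero [DecidableEq m] :
    (fromBlocks 1 0 0 0 : Matrix (m ⊕ n) (m ⊕ n) 𝕜).PosSemidef := by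
  simpa [fromBlocks_conjTranspose, fromBlocks_multiply] using
    posSemidef_conjTranspose_mul_self (fromBlocks 1 0 0 0 : Matrix (m ⊕ n) (m ⊕ n) 𝕜)

end Matrix

lemma mem_HSsub_iff {a b : ℕ} {v : EuclideanSpace ℂ (Fin a ⊕ Fin b)} :
    v ∈ HSsub a b ↔ ∀ j, v (Sum.inr j) = 0 := by
  refine ⟨?_, fun hv => ⟨v, ?_⟩⟩
  · rintro ⟨w, rfl⟩ j
    simp [toLpLin_apply, mulVec, dotProduct, Fintype.sum_sum_type]
  · ext (i | j) <;> simp [toLpLin_apply, mulVec, dotProduct, Fintype.sum_sum_type, hv, one_apply]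

lemma mem_orthogonal_HSsub_iff {a b : ℕ} {v : EuclideanSpace ℂ (Fin a ⊕ Fin b)} :
    v ∈ (HSsub a b)ᗮ ↔ ∀ i, v (Sum.inl i) = 0 := by
  refine ⟨fun hv i => ?_, fun hv u hu => ?_⟩
  · have hi : EuclideanSpace.single (Sum.inl i) (1 : ℂ) ∈ HSsub a b := by
      simp [mem_HSsub_iff]
    simpa [EuclideanSpace.inner_single_left] using hv _ hi
  · rw [mem_HSsub_iff] at hu
    simp [PiLp.inner_apply, Fintype.sum_sum_type, hu, hv]

lemma msupp_le_HSsub_iff_col_eq_zero {a b : ℕ} (X : Matrix (Fin a ⊕ Fin b) (Fin a ⊕ Fin b) ℂ) :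
    msupp X ≤ HSsub a b ↔ ∀ j, X.col (Sum.inr j) = 0 := by
  rw [msupp, Submodule.orthogonal_le_iff_orthogonal_le]
  refine ⟨fun h j => ?_, fun h v hv => ?_⟩
  · have hj : EuclideanSpace.single (Sum.inr j) (1 : ℂ) ∈ (HSsub a b)ᗮ := by
      simp [mem_orthogonal_HSsub_iff]
    have := congrArg WithLp.ofLp (LinearMap.mem_ker.mp (h hj))
    simpa [toLpLin_apply, mulVec_single_one] using this
  · rw [mem_orthogonal_HSsub_iff] at hv
    ext i
    have hXi : ∀ j, X i (Sum.inr j) = 0 := fun j => congrFun (h j) i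
    simp [toLpLin_apply, mulVec, dotProduct, Fintype.sum_sum_type, hv, hXi]

lemma Matrix.PosSemidef.msupp_le_HSsub_iff {a b : ℕ}
    {X : Matrix (Fin a ⊕ Fin b) (Fin a ⊕ Fin b) ℂ} (hX : X.PosSemidef) :
    msupp X ≤ HSsub a b ↔ X.toBlocks₂₂ = 0 := by
  rw [msupp_le_HSsub_iff_col_eq_zero]
  refine ⟨fun h => ?_, fun h j => hX.col_eq_zero_of_diag_eq_zero (congrFun₂ h j j)⟩
  ext i j
  exact congrFun (h j) (Sum.inr i)

/-- `H_S` is invariant for the CP map `T` iff the operator subspace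
`𝔥_S ⊕ 𝔥_{SR}` (Hermitian operators with vanishing lower-right block)
is invariant under `T`. -/
theorem stmt_3 {a b K : ℕ}
    (M : Fin K → Matrix (Fin a ⊕ Fin b) (Fin a ⊕ Fin b) ℂ) :
    (∀ ρ : Matrix (Fin a ⊕ Fin b) (Fin a ⊕ Fin b) ℂ, ρ.PosSemidef →
        msupp ρ ≤ HSsub a b → msupp (∑ k, M k * ρ * (M k)ᴴ) ≤ HSsub a b) ↔
      (∀ A : Matrix (Fin a ⊕ Fin b) (Fin a ⊕ Fin b) ℂ, A.IsHermitian →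
        A.toBlocks₂₂ = 0 → (∑ k, M k * A * (M k)ᴴ).toBlocks₂₂ = 0) := by
  constructor
  · intro hL A _ hA₂₂
    have hP : (fromBlocks 1 0 0 0 : Matrix (Fin a ⊕ Fin b) (Fin a ⊕ Fin b) ℂ).PosSemidef :=
      posSemidef_fromBlocks_one_zero
    have hTP := (hP.sum_mul_mul_conjTranspose M).msupp_le_HSsub_iff.mp
      (hL _ hP (hP.msupp_le_HSsub_iff.mpr (toBlocks_fromBlocks₂₂ ..)))
    simp only [toBlocks₂₂_sum, toBlocks₂₂_mul_fromBlocks_one_mul_conjTranspose] at hTP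
    have hM₂₁ := eq_zero_of_sum_mul_conjTranspose_self_eq_zero hTP
    simp [toBlocks₂₂_sum, toBlocks₂₂_mul_mul_conjTranspose_of_toBlocks₂₁_eq_zero (hM₂₁ _), hA₂₂]
  · intro hR ρ hρ hsupp
    rw [(hρ.sum_mul_mul_conjTranspose M).msupp_le_HSsub_iff]
    exact hR ρ hρ.isHermitian (hρ.msupp_le_HSsub_iff.mp hsupp)
end

section
/- Let T be a CPTP map on a finite-dimensional Hilbert space and H_S a subspace with projection Π_S. H_S is invariant for T if and only if the sequence (T*)^n(Π_S) is monotonically nondecreasing in the Loewner order, i.e., (T*)^{n+1}(Π_S) ≥ (T*)^n(Π_S) for all n ≥ 0. -/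
/-!
Write `Q = 1 - P`. Invariance of `range P` under `T` and monotonicity of `(T*)ⁿ(P)` are both
equivalent to the vanishing of the off-diagonal blocks `Q Mₖ P` of all Kraus operators.
For invariance, apply the hypothesis to `ρ = P`: then `Q T(P) Q = ∑ₖ (Q Mₖ P)(Q Mₖ P)ᴴ = 0`.
For monotonicity, `T*` is positive, so the sequence is nondecreasing as soon as `P ≤ T*(P)`,
which by unitality reads `T*(Q) ≤ Q`. Sandwiching by `P` gives `∑ₖ (Q Mₖ P)ᴴ(Q Mₖ P) ≤ P Q P = 0`;
conversely, if `Q Mₖ P = 0` then `T*(Q) = Q T*(Q) Q ≤ Q`.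
-/

open Matrix
open scoped ComplexOrder

theorem Monotone.iterate_le_iterate_succ_iff {α : Type*} [Preorder α] {f : α → α}
    (hf : Monotone f) {x : α} : (∀ n, f^[n] x ≤ f^[n + 1] x) ↔ x ≤ f x :=
  ⟨fun h => h 0, fun h n => hf.monotone_iterate_of_le_map h n.le_succ⟩

namespace Matrix

open scoped MatrixOrder

section SumOfSquares

variable {m n ι 𝕜 : Type*} [RCLike 𝕜] [Fintype m] [Fintype n] [Fintype ι]

theorem sum_conjTranspose_mul_self_eq_zero_iff {X : ι → Matrix m n 𝕜} :
    ∑ k, (X k)ᴴ * X k = 0 ↔ ∀ k, X k = 0 := by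
  simp [Finset.sum_eq_zero_iff_of_nonneg fun k _ =>
    (posSemidef_conjTranspose_mul_self (X k)).nonneg]

theorem sum_self_mul_conjTranspose_eq_zero_iff {X : ι → Matrix m n 𝕜} :
    ∑ k, X k * (X k)ᴴ = 0 ↔ ∀ k, X k = 0 := by
  simpa using sum_conjTranspose_mul_self_eq_zero_iff (X := fun k => (X k)ᴴ)

end SumOfSquares

section Support

variable {n : Type*} [Fintype n] [DecidableEq n]

theorem msupp_eq_range {A : Matrix n n ℂ} (hA : A.IsHermitian) :
    msupp A = LinearMap.range (toEuclideanLin A) := by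
  rw [msupp, LinearMap.orthogonal_ker, ← toEuclideanLin_conjTranspose_eq_adjoint, hA.eq]

theorem range_toEuclideanLin_le_iff {P A : Matrix n n ℂ} (hP : IsIdempotentElem P) :
    LinearMap.range (toEuclideanLin A) ≤ LinearMap.range (toEuclideanLin P) ↔ P * A = A := by
  have hP' : IsIdempotentElem (toEuclideanLin P) := by
    rw [IsIdempotentElem, Module.End.mul_eq_comp, ← toLpLin_mul, hP.eq]
  rw [← LinearMap.IsIdempotentElem.comp_eq_right_iff hP', ← toLpLin_mul,
    toEuclideanLin.injective.eq_iff]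

theorem msupp_le_range_iff {P ρ : Matrix n n ℂ} (hP : IsIdempotentElem P) (hρ : ρ.IsHermitian) :
    msupp ρ ≤ LinearMap.range (toEuclideanLin P) ↔ P * ρ = ρ := by
  rw [msupp_eq_range hρ, range_toEuclideanLin_le_iff hP]

end Support

section Kraus

variable {n ι 𝕜 : Type*} [RCLike 𝕜] [Fintype n] [Fintype ι]

def krausMap (M : ι → Matrix n n 𝕜) (ρ : Matrix n n 𝕜) : Matrix n n 𝕜 :=
  ∑ k, M k * ρ * (M k)ᴴ

def krausDual (M : ι → Matrix n n 𝕜) (A : Matrix n n 𝕜) : Matrix n n 𝕜 :=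
  ∑ k, (M k)ᴴ * A * M k

variable {M : ι → Matrix n n 𝕜}

theorem PosSemidef.krausMap {ρ : Matrix n n 𝕜} (hρ : ρ.PosSemidef) : (krausMap M ρ).PosSemidef :=
  posSemidef_sum _ fun k _ => hρ.mul_mul_conjTranspose_same (M k)

theorem krausDual_mono : Monotone (krausDual M) := fun A B hAB =>
  Finset.sum_le_sum fun k _ => by
    simpa only [star_eq_conjTranspose] using star_left_conjugate_le_conjugate hAB (M k)

theorem krausDual_nonneg {A : Matrix n n 𝕜} (hA : 0 ≤ A) : 0 ≤ krausDual M A := by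
  simpa [krausDual] using krausDual_mono (M := M) hA

variable [DecidableEq n]

theorem krausDual_one_sub (hM : ∑ k, (M k)ᴴ * M k = 1) (A : Matrix n n 𝕜) :
    krausDual M (1 - A) = 1 - krausDual M A := by
  simp only [krausDual, mul_sub, sub_mul, mul_one, Finset.sum_sub_distrib, hM]

/-- Every Kraus operator maps `range P` into itself (for `P` a projection). -/
def KrausInvariant (M : ι → Matrix n n 𝕜) (P : Matrix n n 𝕜) : Prop :=
  ∀ k, (1 - P) * M k * P = 0

theorem KrausInvariant.mul_krausMap {P ρ : Matrix n n 𝕜} (h : KrausInvariant M P)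
    (hρ : P * ρ = ρ) : P * krausMap M ρ = krausMap M ρ := by
  have hMP : ∀ k, P * M k * P = M k * P := fun k => by
    simpa [sub_mul, sub_eq_zero, eq_comm] using h k
  rw [← hρ]
  simp only [krausMap, Finset.mul_sum, ← mul_assoc, hMP]

variable {P : Matrix n n 𝕜} (hP : IsStarProjection P)
include hP

theorem krausInvariant_iff_compl_mul_krausMap_mul_compl :
    KrausInvariant M P ↔ (1 - P) * krausMap M P * (1 - P) = 0 := by
  have hPH : Pᴴ = P := hP.isSelfAdjoint
  have hQH : (1 - P)ᴴ = 1 - P := hP.one_sub.isSelfAdjoint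
  rw [KrausInvariant, ← sum_self_mul_conjTranspose_eq_zero_iff, krausMap, Finset.mul_sum,
    Finset.sum_mul]
  refine Eq.congr_left (Finset.sum_congr rfl fun k _ => ?_)
  simp only [conjTranspose_mul, hPH, hQH, mul_assoc, hP.isIdempotentElem.mul_self_mul]

theorem krausInvariant_iff_mul_krausDual_compl_mul :
    KrausInvariant M P ↔ P * krausDual M (1 - P) * P = 0 := by
  have hPH : Pᴴ = P := hP.isSelfAdjoint
  have hQH : (1 - P)ᴴ = 1 - P := hP.one_sub.isSelfAdjoint
  rw [KrausInvariant, ← sum_conjTranspose_mul_self_eq_zero_iff, krausDual, Finset.mul_sum,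
    Finset.sum_mul]
  refine Eq.congr_left (Finset.sum_congr rfl fun k _ => ?_)
  simp only [conjTranspose_mul, hPH, hQH, mul_assoc, hP.one_sub.isIdempotentElem.mul_self_mul]

theorem KrausInvariant.krausDual_compl (h : KrausInvariant M P) :
    krausDual M (1 - P) = (1 - P) * krausDual M (1 - P) * (1 - P) := by
  have hQH : (1 - P)ᴴ = 1 - P := hP.one_sub.isSelfAdjoint
  have hQ : IsIdempotentElem (1 - P) := hP.one_sub.isIdempotentElem
  have hQM : ∀ k, (1 - P) * M k * (1 - P) = (1 - P) * M k := fun k => by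
    rw [mul_sub, mul_one, h k, sub_zero]
  simp only [krausDual, Finset.mul_sum, Finset.sum_mul]
  refine Finset.sum_congr rfl fun k _ => ?_
  calc (M k)ᴴ * (1 - P) * M k = ((1 - P) * M k)ᴴ * ((1 - P) * M k) := by
        simp only [conjTranspose_mul, hQH, mul_assoc, hQ.mul_self_mul]
    _ = ((1 - P) * M k * (1 - P))ᴴ * ((1 - P) * M k * (1 - P)) := by rw [hQM]
    _ = (1 - P) * ((M k)ᴴ * (1 - P) * M k) * (1 - P) := by
        simp only [conjTranspose_mul, hQH, mul_assoc, hQ.mul_self_mul]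

theorem le_krausDual_iff (hM : ∑ k, (M k)ᴴ * M k = 1) :
    P ≤ krausDual M P ↔ KrausInvariant M P := by
  have hPH : star P = P := hP.isSelfAdjoint
  have hQH : star (1 - P) = 1 - P := hP.one_sub.isSelfAdjoint
  rw [← sub_le_sub_iff_left 1, ← krausDual_one_sub hM]
  constructor
  · intro hle
    refine (krausInvariant_iff_mul_krausDual_compl_mul hP).2 (le_antisymm ?_ ?_)
    · simpa [hPH, hP.mul_one_sub_self] using star_left_conjugate_le_conjugate hle P
    · simpa [hPH] using star_left_conjugate_nonneg (krausDual_nonneg (M := M) hP.one_sub.nonneg) P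
  · intro h
    have hle_one : krausDual M (1 - P) ≤ 1 := by
      rw [krausDual_one_sub hM]
      exact sub_le_self 1 (krausDual_nonneg hP.nonneg)
    calc krausDual M (1 - P) = (1 - P) * krausDual M (1 - P) * (1 - P) := h.krausDual_compl hP
      _ ≤ (1 - P) * 1 * (1 - P) := by
        simpa [hQH] using star_left_conjugate_le_conjugate hle_one (1 - P)
      _ = 1 - P := by rw [mul_one, hP.one_sub.isIdempotentElem.eq]

theorem forall_posSemidef_iterate_krausDual_sub_iff (hM : ∑ k, (M k)ᴴ * M k = 1) :
    (∀ n : ℕ, ((krausDual M)^[n + 1] P - (krausDual M)^[n] P).PosSemidef) ↔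
      KrausInvariant M P :=
  krausDual_mono.iterate_le_iterate_succ_iff.trans (le_krausDual_iff hP hM)

end Kraus

theorem forall_msupp_krausMap_le_range_iff {n ι : Type*} [Fintype n] [DecidableEq n] [Fintype ι]
    {M : ι → Matrix n n ℂ} {P : Matrix n n ℂ} (hP : IsStarProjection P) :
    (∀ ρ : Matrix n n ℂ, ρ.PosSemidef → msupp ρ ≤ LinearMap.range (toEuclideanLin P) →
        msupp (krausMap M ρ) ≤ LinearMap.range (toEuclideanLin P)) ↔ KrausInvariant M P := by
  have hP_psd : P.PosSemidef := hP.nonneg.posSemidef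
  refine ⟨fun h => ?_, fun h ρ hρ hsupp => ?_⟩
  · have hPT : P * krausMap M P = krausMap M P :=
      (msupp_le_range_iff hP.isIdempotentElem hP_psd.krausMap.isHermitian).1 <|
        h P hP_psd <|
          (msupp_le_range_iff hP.isIdempotentElem hP_psd.isHermitian).2 hP.isIdempotentElem.eq
    rw [krausInvariant_iff_compl_mul_krausMap_mul_compl hP, sub_mul, one_mul, hPT, sub_self,
      zero_mul]
  · rw [msupp_le_range_iff hP.isIdempotentElem hρ.krausMap.isHermitian]
    exact h.mul_krausMap ((msupp_le_range_iff hP.isIdempotentElem hρ.isHermitian).1 hsupp)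

end Matrix

/-- For a CPTP map `T` with Kraus operators `M_k` and a subspace `H_S` given by an
orthogonal projection `P`, `H_S` is invariant for `T` iff the sequence `(T*)^n(P)`
is monotonically nondecreasing in the Loewner order. -/
theorem stmt_6 {d K : ℕ} (M : Fin K → Matrix (Fin d) (Fin d) ℂ)
    (hTP : ∑ k, (M k)ᴴ * M k = 1)
    (P : Matrix (Fin d) (Fin d) ℂ) (hProj : P * P = P) (hHerm : Pᴴ = P)
    (Tdual : Matrix (Fin d) (Fin d) ℂ → Matrix (Fin d) (Fin d) ℂ)
    (hTdual : Tdual = fun A => ∑ k, (M k)ᴴ * A * M k) :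
    (∀ ρ : Matrix (Fin d) (Fin d) ℂ, ρ.PosSemidef →
        msupp ρ ≤ LinearMap.range (Matrix.toEuclideanLin P) →
        msupp (∑ k, M k * ρ * (M k)ᴴ) ≤ LinearMap.range (Matrix.toEuclideanLin P)) ↔
      ∀ n : ℕ, (Tdual^[n + 1] P - Tdual^[n] P).PosSemidef := by
  have hP : IsStarProjection P := ⟨hProj, hHerm⟩
  subst hTdual
  exact (forall_msupp_krausMap_le_range_iff hP).trans
    (forall_posSemidef_iterate_krausDual_sub_iff hP hTP).symm
end

section
/- Let T be a CPTP map on H = H_S ⊕ H_R with H_S invariant and let T_R(A) = Π_R T(A) Π_R be the reduced map on operators supported on H_R. If the spectral radius of T_R satisfies σ(T_R) < 1, then H_S is globally asymptotically stable: for every density operator ρ, ‖T^n(ρ) − Π_S T^n(ρ) Π_S‖ → 0 as n → ∞. Equivalently, Tr(Π_R T^n(ρ)) → 0. -/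
/-!
Invariance of `H_S` forces `Π_R M_k Π_S = 0` for every Kraus operator, since
`Π_R T(Π_S) Π_R = ∑_k (Π_R M_k Π_S)(Π_R M_k Π_S)ᴴ` vanishes. Hence the compression
`C(A) = Π_R A Π_R` intertwines `T` with `T_R = C ∘ T ∘ C`, i.e. `C ∘ Tⁿ = T_Rⁿ ∘ C`, so
`Tr(Π_R Tⁿ(ρ)) = Tr(T_Rⁿ(Π_R ρ Π_R))`. By Gelfand's formula `‖T_Rⁿ‖` decays geometrically
when `σ(T_R) < 1`, and the trace tends to `0`.
-/

open Matrix Filter Topology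
open scoped ComplexOrder

/-- Projection onto `H_S`. -/
noncomputable def PiS (a b : ℕ) : Matrix (Fin a ⊕ Fin b) (Fin a ⊕ Fin b) ℂ :=
  Matrix.fromBlocks 1 0 0 0

/-- Projection onto `H_R`. -/
noncomputable def PiR (a b : ℕ) : Matrix (Fin a ⊕ Fin b) (Fin a ⊕ Fin b) ℂ :=
  Matrix.fromBlocks 0 0 0 1

/-- The CP map `A ↦ Σ_k M_k A M_k†` as a linear endomorphism. -/
noncomputable def krausEnd {n : Type*} [Fintype n] [DecidableEq n] {K : ℕ}
    (M : Fin K → Matrix n n ℂ) : Module.End ℂ (Matrix n n ℂ) where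
  toFun A := ∑ k, M k * A * (M k)ᴴ
  map_add' A B := by
    simp [Matrix.mul_add, Matrix.add_mul, Finset.sum_add_distrib]
  map_smul' c A := by
    simp [Matrix.mul_smul, Matrix.smul_mul, Finset.smul_sum]

/-- Compression `A ↦ P A P` as a linear endomorphism. -/
noncomputable def sandwichEnd {n : Type*} [Fintype n] [DecidableEq n]
    (P : Matrix n n ℂ) : Module.End ℂ (Matrix n n ℂ) where
  toFun A := P * A * P
  map_add' A B := by simp [Matrix.mul_add, Matrix.add_mul]
  map_smul' c A := by simp [Matrix.mul_smul, Matrix.smul_mul]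

theorem tendsto_pow_atTop_nhds_zero_of_spectralRadius_lt_one {A : Type*} [NormedRing A]
    [NormedAlgebra ℂ A] [CompleteSpace A] {a : A} (ha : spectralRadius ℂ a < 1) :
    Tendsto (a ^ ·) atTop (𝓝 0) := by
  obtain ⟨r, hρr, hr⟩ := ENNReal.lt_iff_exists_nnreal_btwn.mp ha
  have hr1 : (r : ℝ) < 1 := mod_cast hr
  have hbound : ∀ᶠ n : ℕ in atTop, ‖a ^ n‖ ≤ (r : ℝ) ^ n := by
    filter_upwards [eventually_ge_atTop 1,
      (spectrum.pow_nnnorm_pow_one_div_tendsto_nhds_spectralRadius a).eventually_lt_const hρr]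
      with n hn1 hn
    rw [one_div, ENNReal.rpow_inv_lt_iff (by positivity), ENNReal.rpow_natCast] at hn
    exact_mod_cast hn.le
  exact squeeze_zero_norm' hbound (tendsto_pow_atTop_nhds_zero_of_lt_one r.coe_nonneg hr1)

theorem Module.End.tendsto_pow_apply_atTop_nhds_zero {V : Type*} [NormedAddCommGroup V]
    [NormedSpace ℂ V] [FiniteDimensional ℂ V] {f : Module.End ℂ V}
    (hf : ∀ μ ∈ spectrum ℂ f, ‖μ‖ < 1) (x : V) :
    Tendsto (fun n => (f ^ n) x) atTop (𝓝 0) := by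
  rcases subsingleton_or_nontrivial V with _ | _
  · simp [Subsingleton.elim _ (0 : V)]
  set g := Module.End.toContinuousLinearMap V f
  have hg : spectralRadius ℂ g < 1 := by
    refine mod_cast spectrum.spectralRadius_lt_of_forall_lt g fun z hz => ?_
    rw [AlgEquiv.spectrum_eq] at hz
    exact_mod_cast hf z hz
  have := ((ContinuousLinearMap.apply ℂ V x).continuous.tendsto 0).comp
    (tendsto_pow_atTop_nhds_zero_of_spectralRadius_lt_one hg)
  simp only [Function.comp_def, ContinuousLinearMap.apply_apply, _root_.zero_apply, g,
    ← map_pow] at this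
  exact this

open scoped MatrixOrder in
theorem Matrix.eq_zero_of_sum_mul_conjTranspose_self_eq_zero_s13 {m n ι : Type*} [Fintype m]
    [Fintype n] {s : Finset ι} {A : ι → Matrix m n ℂ} (h : ∑ i ∈ s, A i * (A i)ᴴ = 0)
    {i : ι} (hi : i ∈ s) : A i = 0 :=
  self_mul_conjTranspose_eq_zero.mp <| (Finset.sum_eq_zero_iff_of_nonneg fun j _ =>
    (posSemidef_self_mul_conjTranspose (A j)).nonneg).mp h i hi

section Support

variable {n : Type*} [Fintype n] [DecidableEq n]

theorem msupp_eq_range_toEuclideanLin_conjTranspose (X : Matrix n n ℂ) :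
    msupp X = LinearMap.range (toEuclideanLin Xᴴ) := by
  rw [msupp, LinearMap.orthogonal_ker, toEuclideanLin_conjTranspose_eq_adjoint]

theorem mul_eq_zero_of_msupp_le_range {X P Q : Matrix n n ℂ}
    (hX : msupp X ≤ LinearMap.range (toEuclideanLin P)) (hPQ : Pᴴ * Q = 0) : X * Q = 0 := by
  have hQP : toEuclideanLin Qᴴ ∘ₗ toEuclideanLin P = 0 := by
    rw [← toLpLin_mul_same, ← conjTranspose_conjTranspose P, ← conjTranspose_mul, hPQ,
      conjTranspose_zero, map_zero]
  have hQX := (msupp_eq_range_toEuclideanLin_conjTranspose X ▸ hX).trans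
    (LinearMap.range_le_ker_iff.mpr hQP)
  rw [LinearMap.range_le_ker_iff, ← toLpLin_mul_same, ← conjTranspose_mul,
    ← map_zero toEuclideanLin] at hQX
  simpa using congrArg conjTranspose (toEuclideanLin.injective hQX)

end Support

theorem semiconjBy_sandwichEnd_krausEnd {n : Type*} [Fintype n] [DecidableEq n] {K : ℕ}
    {P : Matrix n n ℂ} {M : Fin K → Matrix n n ℂ} (hP : P.IsHermitian)
    (hM : ∀ k, P * M k * P = P * M k) :
    SemiconjBy (sandwichEnd P) (krausEnd M) (sandwichEnd P ∘ₗ krausEnd M ∘ₗ sandwichEnd P) := by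
  have hMP : ∀ k, P * (M k)ᴴ * P = (M k)ᴴ * P := fun k => by
    simpa [conjTranspose_mul, hP.eq, mul_assoc] using congrArg conjTranspose (hM k)
  have hcompress : sandwichEnd P * (krausEnd M * sandwichEnd P) = sandwichEnd P * krausEnd M := by
    ext1 X
    simp only [Module.End.mul_apply, sandwichEnd, krausEnd, LinearMap.coe_mk, AddHom.coe_mk,
      Finset.mul_sum, Finset.sum_mul]
    refine Finset.sum_congr rfl fun k _ => ?_
    calc P * (M k * (P * X * P) * (M k)ᴴ) * P = (P * M k * P) * X * (P * (M k)ᴴ * P) := by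
          simp only [mul_assoc]
      _ = P * (M k * X * (M k)ᴴ) * P := by rw [hM, hMP]; simp only [mul_assoc]
  show sandwichEnd P * krausEnd M = sandwichEnd P * (krausEnd M * sandwichEnd P) * sandwichEnd P
  rw [hcompress, mul_assoc, hcompress]

section Projections

variable {a b : ℕ}

theorem PiS_mul_PiS : PiS a b * PiS a b = PiS a b := by simp [PiS, fromBlocks_multiply]

theorem PiS_mul_PiR : PiS a b * PiR a b = 0 := by simp [PiS, PiR, fromBlocks_multiply]

theorem PiR_mul_PiR : PiR a b * PiR a b = PiR a b := by simp [PiR, fromBlocks_multiply]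

theorem PiS_add_PiR : PiS a b + PiR a b = 1 := by
  rw [PiS, PiR, fromBlocks_add, ← fromBlocks_one]
  simp

theorem isHermitian_PiS : (PiS a b).IsHermitian := by
  simp [IsHermitian, PiS, fromBlocks_conjTranspose]

theorem isHermitian_PiR : (PiR a b).IsHermitian := by
  simp [IsHermitian, PiR, fromBlocks_conjTranspose]

theorem posSemidef_PiS : (PiS a b).PosSemidef := by
  simpa [isHermitian_PiS.eq, PiS_mul_PiS] using posSemidef_conjTranspose_mul_self (PiS a b)

theorem msupp_PiS : msupp (PiS a b) = LinearMap.range (toEuclideanLin (PiS a b)) := by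
  rw [msupp_eq_range_toEuclideanLin_conjTranspose, isHermitian_PiS.eq]

theorem trace_PiR_mul (A : Matrix (Fin a ⊕ Fin b) (Fin a ⊕ Fin b) ℂ) :
    (PiR a b * A).trace = (PiR a b * A * PiR a b).trace := by
  rw [trace_mul_cycle, PiR_mul_PiR]

theorem PiR_mul_mul_PiR_of_mul_PiS_eq_zero {A : Matrix (Fin a ⊕ Fin b) (Fin a ⊕ Fin b) ℂ}
    (h : PiR a b * A * PiS a b = 0) : PiR a b * A * PiR a b = PiR a b * A := by
  rw [← zero_add (_ * PiR a b), ← h, ← mul_add, PiS_add_PiR, mul_one]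

end Projections

theorem PiR_mul_mul_PiS_eq_zero_of_msupp_le {a b K : ℕ}
    {M : Fin K → Matrix (Fin a ⊕ Fin b) (Fin a ⊕ Fin b) ℂ}
    (hinv : msupp (∑ k, M k * PiS a b * (M k)ᴴ) ≤ LinearMap.range (toEuclideanLin (PiS a b)))
    (k : Fin K) : PiR a b * M k * PiS a b = 0 := by
  have hR : (∑ k, M k * PiS a b * (M k)ᴴ) * PiR a b = 0 :=
    mul_eq_zero_of_msupp_le_range hinv (by rw [isHermitian_PiS.eq, PiS_mul_PiR])
  have hsum : ∑ k, (PiR a b * M k * PiS a b) * (PiR a b * M k * PiS a b)ᴴ = 0 := by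
    calc _ = PiR a b * ((∑ k, M k * PiS a b * (M k)ᴴ) * PiR a b) := by
          simp only [Finset.mul_sum, Finset.sum_mul, conjTranspose_mul, isHermitian_PiS.eq,
            isHermitian_PiR.eq, mul_assoc]
          simp only [← mul_assoc (PiS a b) (PiS a b), PiS_mul_PiS]
      _ = 0 := by rw [hR, mul_zero]
  exact eq_zero_of_sum_mul_conjTranspose_self_eq_zero_s13 hsum (Finset.mem_univ k)

theorem stmt_13_general {a b K : ℕ}
    (M : Fin K → Matrix (Fin a ⊕ Fin b) (Fin a ⊕ Fin b) ℂ)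
    (T : Matrix (Fin a ⊕ Fin b) (Fin a ⊕ Fin b) ℂ →
      Matrix (Fin a ⊕ Fin b) (Fin a ⊕ Fin b) ℂ)
    (hT : T = fun A => ∑ k, M k * A * (M k)ᴴ)
    (hinvS : ∀ ρ : Matrix (Fin a ⊕ Fin b) (Fin a ⊕ Fin b) ℂ, ρ.PosSemidef →
        msupp ρ ≤ LinearMap.range (Matrix.toEuclideanLin (PiS a b)) →
        msupp (T ρ) ≤ LinearMap.range (Matrix.toEuclideanLin (PiS a b)))
    (TR : Module.End ℂ (Matrix (Fin a ⊕ Fin b) (Fin a ⊕ Fin b) ℂ))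
    (hTR : TR = sandwichEnd (PiR a b) ∘ₗ krausEnd M ∘ₗ sandwichEnd (PiR a b))
    (hspec : ∀ μ ∈ spectrum ℂ TR, ‖μ‖ < 1) :
    ∀ ρ : Matrix (Fin a ⊕ Fin b) (Fin a ⊕ Fin b) ℂ, ρ.PosSemidef → ρ.trace = 1 →
      Tendsto (fun n => (PiR a b * T^[n] ρ).trace) atTop (𝓝 0) := by
  intro ρ _ _
  have hTK : T = krausEnd M := hT
  have hRS := PiR_mul_mul_PiS_eq_zero_of_msupp_le (hT ▸ hinvS _ posSemidef_PiS msupp_PiS.le)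
  have hsemi : SemiconjBy (sandwichEnd (PiR a b)) (krausEnd M) TR := hTR ▸
    semiconjBy_sandwichEnd_krausEnd isHermitian_PiR fun k =>
      PiR_mul_mul_PiR_of_mul_PiS_eq_zero (hRS k)
  have htrace (n : ℕ) :
      (PiR a b * T^[n] ρ).trace = ((TR ^ n) (PiR a b * ρ * PiR a b)).trace := by
    rw [trace_PiR_mul, hTK, ← Module.End.coe_pow]
    exact congrArg (fun f : Module.End ℂ _ => (f ρ).trace) (hsemi.pow_right n).eq
  -- Matrices carry no global norm; any norm induces the product topology of the goal.
  let _ := Matrix.normedAddCommGroup (n := Fin a ⊕ Fin b) (m := Fin a ⊕ Fin b) (α := ℂ)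
  let _ : NormedSpace ℂ (Matrix (Fin a ⊕ Fin b) (Fin a ⊕ Fin b) ℂ) := Matrix.normedSpace
  simpa [htrace, Function.comp_def] using (continuous_id.matrix_trace.tendsto 0).comp
    (Module.End.tendsto_pow_apply_atTop_nhds_zero hspec (PiR a b * ρ * PiR a b))

/-- If `H_S` is invariant for the CPTP map `T` and the reduced map `T_R` has spectral
radius `< 1`, then `H_S` is globally asymptotically stable:
`Tr(Π_R T^n(ρ)) → 0` for every density operator `ρ`. -/
theorem stmt_13 {a b K : ℕ}
    (M : Fin K → Matrix (Fin a ⊕ Fin b) (Fin a ⊕ Fin b) ℂ)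
    (hTP : ∑ k, (M k)ᴴ * M k = 1)
    (T : Matrix (Fin a ⊕ Fin b) (Fin a ⊕ Fin b) ℂ →
      Matrix (Fin a ⊕ Fin b) (Fin a ⊕ Fin b) ℂ)
    (hT : T = fun A => ∑ k, M k * A * (M k)ᴴ)
    (hinvS : ∀ ρ : Matrix (Fin a ⊕ Fin b) (Fin a ⊕ Fin b) ℂ, ρ.PosSemidef →
        msupp ρ ≤ LinearMap.range (Matrix.toEuclideanLin (PiS a b)) →
        msupp (T ρ) ≤ LinearMap.range (Matrix.toEuclideanLin (PiS a b)))
    (TR : Module.End ℂ (Matrix (Fin a ⊕ Fin b) (Fin a ⊕ Fin b) ℂ))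
    (hTR : TR = sandwichEnd (PiR a b) ∘ₗ krausEnd M ∘ₗ sandwichEnd (PiR a b))
    (hspec : ∀ μ ∈ spectrum ℂ TR, ‖μ‖ < 1) :
    ∀ ρ : Matrix (Fin a ⊕ Fin b) (Fin a ⊕ Fin b) ℂ, ρ.PosSemidef → ρ.trace = 1 →
      Tendsto (fun n => (PiR a b * T^[n] ρ).trace) atTop (𝓝 0) :=
  stmt_13_general M T hT hinvS TR hTR hspec
end

section
/- Let T be a CPTP map with Kraus operators {M_k} on H = H_S ⊕ H_{T_1} ⊕ ... ⊕ H_{T_N}, such that in this block decomposition each M_k is block upper-Hessenberg of the DID form: the blocks from H_{T_i} to H_S and to H_{T_j} with j < i−1 are all zero, and for each i, ∩_k ker(M_{k,P_i}) = {0}, where M_{k,P_i} is the block mapping H_{T_i} to H_{T_{i−1}} (with H_{T_0} := H_S). Then no fixed point of T (as a density operator) has support intersecting ⊕_{i=1}^N H_{T_i}; in particular every fixed density operator is supported in H_S. -/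
open Matrix
open scoped ComplexOrder

/-- Index type for the DID chain `H = H_S ⊕ H_{T_1} ⊕ ... ⊕ H_{T_N}`
(position `0` is `H_S`). -/
abbrev CIdx {N : ℕ} (ds : Fin (N + 1) → ℕ) := Σ i : Fin (N + 1), Fin (ds i)

/-- The orthogonal projection onto the `j`-th subspace of the chain. -/
noncomputable def PTj {N : ℕ} (ds : Fin (N + 1) → ℕ) (j : Fin (N + 1)) :
    Matrix (CIdx ds) (CIdx ds) ℂ :=
  Matrix.diagonal (fun x => if x.1 = j then (1 : ℂ) else 0)

/-- The coupling block `M_{k,P_i} : H_{T_i} → H_{T_{i-1}}` (with `H_{T_0} = H_S`). -/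
noncomputable def Pblk {N K : ℕ} {ds : Fin (N + 1) → ℕ}
    (M : Fin K → Matrix (CIdx ds) (CIdx ds) ℂ) (k : Fin K) (i : Fin N) :
    Matrix (Fin (ds i.castSucc)) (Fin (ds i.succ)) ℂ :=
  Matrix.of fun p q => M k ⟨i.castSucc, p⟩ ⟨i.succ, q⟩

namespace Matrix

section Kraus

variable {ι κ : Type*} [Fintype ι] [Fintype κ]

theorem PosSemidef.mul_eq_zero_of_mul_mul_conjTranspose_eq_zero [DecidableEq ι]
    {m : Type*} [Fintype m] {ρ : Matrix ι ι ℂ} (hρ : ρ.PosSemidef) {A : Matrix m ι ℂ}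
    (h : A * ρ * Aᴴ = 0) : A * ρ = 0 := by
  obtain ⟨B, rfl⟩ : ∃ B : Matrix ι ι ℂ, ρ = Bᴴ * B := by
    open scoped MatrixOrder in
    exact CStarAlgebra.nonneg_iff_eq_star_mul_self.mp hρ.nonneg
  have hAB : A * Bᴴ = 0 := by
    rw [← self_mul_conjTranspose_eq_zero, conjTranspose_mul, conjTranspose_conjTranspose]
    simpa only [Matrix.mul_assoc] using h
  rw [← Matrix.mul_assoc, hAB, Matrix.zero_mul]

theorem sum_trace_eq_zero_iff_of_posSemidef {X : κ → Matrix ι ι ℂ}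
    (hX : ∀ k, (X k).PosSemidef) : ∑ k, (X k).trace = 0 ↔ ∀ k, X k = 0 := by
  rw [Finset.sum_eq_zero_iff_of_nonneg fun k _ => (hX k).trace_nonneg]
  simp only [Finset.mem_univ, true_implies, fun k => (hX k).trace_eq_zero_iff]

variable [DecidableEq ι]

theorem sum_trace_mul_mul_conjTranspose {M : κ → Matrix ι ι ℂ}
    (hTP : ∑ k, (M k)ᴴ * M k = 1) (Y : Matrix ι ι ℂ) :
    ∑ k, (M k * Y * (M k)ᴴ).trace = Y.trace := by
  simp only [trace_mul_cycle _ Y, ← trace_sum, ← Finset.sum_mul, hTP, Matrix.one_mul]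

theorem trace_mul_mul_conjTranspose_eq_add {V : Matrix ι ι ℂ} (hV : IsStarProjection V)
    {m : Type*} [Fintype m] (A : Matrix ι m ℂ) (Y : Matrix m m ℂ) :
    (A * Y * Aᴴ).trace =
      (V * A * Y * (V * A)ᴴ).trace + ((1 - V) * A * Y * ((1 - V) * A)ᴴ).trace := by
  have hcut : ∀ P : Matrix ι ι ℂ, IsStarProjection P →
      (P * A * Y * (P * A)ᴴ).trace = (A * Y * Aᴴ * P).trace := by
    intro P hP
    have hPh : Pᴴ = P := hP.isSelfAdjoint
    calc (P * A * Y * (P * A)ᴴ).trace = (P * (A * Y * Aᴴ) * P).trace := by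
          simp only [conjTranspose_mul, hPh, Matrix.mul_assoc]
      _ = (P * P * (A * Y * Aᴴ)).trace := trace_mul_cycle _ _ _
      _ = (A * Y * Aᴴ * P).trace := by rw [hP.isIdempotentElem.eq, trace_mul_comm]
  rw [hcut V hV, hcut _ hV.one_sub, ← trace_add, ← Matrix.mul_add, add_sub_cancel,
    Matrix.mul_one]

/-- Trace preservation splits the conserved weight `tr (V ρ V)` into the weight kept in `range V`
and the weight leaving it. -/
theorem one_sub_mul_mul_mul_eq_zero_of_isFixedPt {M : κ → Matrix ι ι ℂ}
    (hTP : ∑ k, (M k)ᴴ * M k = 1) {ρ : Matrix ι ι ℂ} (hρ : ρ.PosSemidef)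
    (hfix : ∑ k, M k * ρ * (M k)ᴴ = ρ) {V : Matrix ι ι ℂ} (hV : IsStarProjection V)
    (hin : ∀ k, V * M k * (1 - V) * ρ = 0) (k : κ) :
    (1 - V) * M k * V * ρ = 0 := by
  have hkept : ∀ k, V * M k * ρ * (V * M k)ᴴ = V * (M k * V) * ρ * (V * (M k * V))ᴴ := by
    intro k
    have h : V * M k * ρ = V * (M k * V) * ρ := by
      rw [← sub_eq_zero, ← Matrix.sub_mul, ← hin k, Matrix.mul_sub, Matrix.mul_one,
        Matrix.mul_assoc]
    have h' : ρ * (V * M k)ᴴ = ρ * (V * (M k * V))ᴴ := by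
      simpa only [conjTranspose_mul, hρ.isHermitian.eq, Matrix.mul_assoc] using
        congrArg conjTranspose h
    rw [h, Matrix.mul_assoc _ ρ, h', ← Matrix.mul_assoc]
  have hleak : ∑ k, ((1 - V) * (M k * V) * ρ * ((1 - V) * (M k * V))ᴴ).trace = 0 := by
    have hconserved : V * ρ * Vᴴ = ∑ k, V * (M k * V) * ρ * (V * (M k * V))ᴴ := by
      conv_lhs => rw [← hfix]
      rw [Matrix.mul_sum, Matrix.sum_mul]
      refine Finset.sum_congr rfl fun k _ => ?_
      rw [← hkept k]
      simp only [conjTranspose_mul, Matrix.mul_assoc]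
    have hsplit : ∀ k, (M k * (V * ρ * Vᴴ) * (M k)ᴴ).trace =
        (V * (M k * V) * ρ * (V * (M k * V))ᴴ).trace +
          ((1 - V) * (M k * V) * ρ * ((1 - V) * (M k * V))ᴴ).trace := by
      intro k
      rw [← trace_mul_mul_conjTranspose_eq_add hV]
      simp only [conjTranspose_mul, Matrix.mul_assoc]
    have htotal := sum_trace_mul_mul_conjTranspose hTP (V * ρ * Vᴴ)
    rwa [Finset.sum_congr rfl fun k _ => hsplit k, Finset.sum_add_distrib, hconserved,
      trace_sum, add_eq_left] at htotal
  have h := (sum_trace_eq_zero_iff_of_posSemidef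
    fun k => hρ.mul_mul_conjTranspose_same _).mp hleak k
  simpa only [Matrix.mul_assoc] using hρ.mul_eq_zero_of_mul_mul_conjTranspose_eq_zero h

end Kraus

def diagonalIndicator {ι : Type*} [DecidableEq ι] (p : ι → Prop) [DecidablePred p] :
    Matrix ι ι ℂ :=
  diagonal fun x => if p x then 1 else 0

theorem isStarProjection_diagonalIndicator {ι : Type*} [Fintype ι] [DecidableEq ι]
    (p : ι → Prop) [DecidablePred p] : IsStarProjection (diagonalIndicator p) := by
  refine ⟨?_, ?_⟩
  · simp [IsIdempotentElem, diagonalIndicator, diagonal_mul_diagonal]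
  · simp [IsSelfAdjoint, diagonalIndicator, star_eq_conjTranspose, diagonal_conjTranspose]

theorem one_sub_diagonalIndicator {ι : Type*} [DecidableEq ι] (p : ι → Prop)
    [DecidablePred p] : 1 - diagonalIndicator p = diagonalIndicator fun x => ¬ p x := by
  rw [diagonalIndicator, diagonalIndicator, ← diagonal_one, diagonal_sub]
  congr 1
  funext x
  split_ifs <;> simp

end Matrix

theorem msupp_le_range_of_mul_eq {n : Type*} [Fintype n] [DecidableEq n]
    {ρ P : Matrix n n ℂ} (hρ : ρ.IsHermitian) (h : P * ρ = ρ) :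
    msupp ρ ≤ LinearMap.range (toEuclideanLin P) := by
  rw [msupp, LinearMap.orthogonal_ker, ← toEuclideanLin_conjTranspose_eq_adjoint, hρ.eq]
  rintro _ ⟨v, rfl⟩
  exact ⟨toEuclideanLin ρ v, by simp [toLpLin_apply, mulVec_mulVec, h]⟩

section DID

variable {N K : ℕ} {ds : Fin (N + 1) → ℕ} {M : Fin K → Matrix (CIdx ds) (CIdx ds) ℂ}
  {ρ : Matrix (CIdx ds) (CIdx ds) ℂ}

theorem fixedPoint_row_eq_zero_of_lower_rows_eq_zero (hTP : ∑ k, (M k)ᴴ * M k = 1)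
    (hDID : ∀ k, ∀ x y : CIdx ds,
      ((x.1 : ℕ) + 1 < (y.1 : ℕ) ∨ (0 < (x.1 : ℕ) ∧ (y.1 : ℕ) = 0)) → M k x y = 0)
    (hker : ∀ i : Fin N, ∀ v : Fin (ds i.succ) → ℂ,
      (∀ k, (Pblk M k i).mulVec v = 0) → v = 0)
    (hρ : ρ.PosSemidef) (hfix : ∑ k, M k * ρ * (M k)ᴴ = ρ) (i : Fin N)
    (hlow : ∀ z : CIdx ds, z.1 ≠ 0 → z.1 < i.succ → ∀ b, ρ z b = 0)
    (p : Fin (ds i.succ)) (y : CIdx ds) : ρ ⟨i.succ, p⟩ y = 0 := by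
  set V := diagonalIndicator fun z : CIdx ds => i.succ ≤ z.1
  have hin : ∀ k, V * M k * (1 - V) * ρ = 0 := by
    intro k
    ext a b
    rw [one_sub_diagonalIndicator, mul_apply, Matrix.zero_apply]
    refine Finset.sum_eq_zero fun z _ => ?_
    by_cases ha : i.succ ≤ a.1
    · by_cases hz : i.succ ≤ z.1
      · simp [V, diagonalIndicator, hz]
      · rcases eq_or_ne z.1 0 with hz0 | hz0
        · have hMaz : M k a z = 0 :=
            hDID k a z (Or.inr ⟨by rw [Fin.le_def, Fin.val_succ] at ha; omega, by simp [hz0]⟩)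
          simp [V, diagonalIndicator, hMaz]
        · simp [V, diagonalIndicator, hlow z hz0 (not_le.mp hz)]
    · simp [V, diagonalIndicator, ha]
  have hout := one_sub_mul_mul_mul_eq_zero_of_isFixedPt hTP hρ hfix
    (isStarProjection_diagonalIndicator _) hin
  suffices hcol : ∀ k, Pblk M k i *ᵥ (fun r => ρ ⟨i.succ, r⟩ y) = 0 from
    congrFun (hker i _ hcol) p
  intro k
  ext q
  have h := congr_fun (congr_fun (hout k) ⟨i.castSucc, q⟩) y
  rw [one_sub_diagonalIndicator, mul_apply, Fintype.sum_sigma, Fintype.sum_eq_single i.succ] at h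
  · simpa [V, diagonalIndicator, Pblk, mulVec, dotProduct] using h
  · intro j hj
    refine Finset.sum_eq_zero fun r _ => ?_
    rcases lt_or_gt_of_ne hj with hlt | hgt
    · simp [diagonalIndicator, not_le.mpr hlt]
    · have hM : M k ⟨i.castSucc, q⟩ ⟨j, r⟩ = 0 :=
        hDID k _ _ (Or.inl (by rw [Fin.lt_def, Fin.val_succ] at hgt; simpa using hgt))
      simp [diagonalIndicator, hM]

theorem fixedPoint_row_eq_zero_of_ne_zero (hTP : ∑ k, (M k)ᴴ * M k = 1)
    (hDID : ∀ k, ∀ x y : CIdx ds,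
      ((x.1 : ℕ) + 1 < (y.1 : ℕ) ∨ (0 < (x.1 : ℕ) ∧ (y.1 : ℕ) = 0)) → M k x y = 0)
    (hker : ∀ i : Fin N, ∀ v : Fin (ds i.succ) → ℂ,
      (∀ k, (Pblk M k i).mulVec v = 0) → v = 0)
    (hρ : ρ.PosSemidef) (hfix : ∑ k, M k * ρ * (M k)ᴴ = ρ) (x y : CIdx ds) (hx : x.1 ≠ 0) :
    ρ x y = 0 := by
  obtain ⟨j, p⟩ := x
  induction j using WellFoundedLT.induction generalizing y with
  | _ j ih =>
    obtain ⟨i, rfl⟩ := Fin.exists_succ_eq.mpr hx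
    exact fixedPoint_row_eq_zero_of_lower_rows_eq_zero hTP hDID hker hρ hfix i
      (fun z hz hlt b => ih z.1 hlt b z.2 hz) p y

end DID

/-- If the Kraus operators of a CPTP map have the (successful) DID block structure —
the blocks from `H_{T_i}` to `H_S` and to `H_{T_j}` with `j < i - 1` vanish, and the
coupling blocks `M_{k,P_i}` have trivial joint kernel — then every fixed density
operator is supported in `H_S`. -/
theorem stmt_15 {N K : ℕ} {ds : Fin (N + 1) → ℕ}
    (M : Fin K → Matrix (CIdx ds) (CIdx ds) ℂ)
    (hTP : ∑ k, (M k)ᴴ * M k = 1)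
    (hDID : ∀ k, ∀ x y : CIdx ds,
      ((x.1 : ℕ) + 1 < (y.1 : ℕ) ∨ (0 < (x.1 : ℕ) ∧ (y.1 : ℕ) = 0)) → M k x y = 0)
    (hker : ∀ i : Fin N, ∀ v : Fin (ds i.succ) → ℂ,
      (∀ k, (Pblk M k i).mulVec v = 0) → v = 0) :
    ∀ ρ : Matrix (CIdx ds) (CIdx ds) ℂ, ρ.PosSemidef → ρ.trace = 1 →
      (∑ k, M k * ρ * (M k)ᴴ) = ρ →
      msupp ρ ≤ LinearMap.range (Matrix.toEuclideanLin (PTj ds 0)) := by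
  intro ρ hρ _ hfix
  refine msupp_le_range_of_mul_eq hρ.isHermitian ?_
  ext x y
  by_cases hx : x.1 = 0
  · simp [PTj, diagonal_mul, hx]
  · simp [PTj, diagonal_mul, hx, fixedPoint_row_eq_zero_of_ne_zero hTP hDID hker hρ hfix x y hx]
end

section
/- Let T be a CPTP map with Kraus operators {M_k}, and H = H_S ⊕ H_{T_1} ⊕ ... ⊕ H_{T_N} with the DID block structure (each M_k block upper triangular with only nearest-neighbor upward couplings M_{k,P_i} from H_{T_i} to H_{T_{i−1}}). Let ρ be a density operator with Π_{T_i} ρ Π_{T_i} = ρ for some i ≥ 1, where H_{T_0} := H_S. Then γ_i Tr(ρ) ≤ Tr(Π_{T_{i−1}} T(ρ)) ≤ Γ_i Tr(ρ), where γ_i and Γ_i are respectively the smallest and the largest eigenvalue of Σ_k M_{k,P_i}† M_{k,P_i}. -/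
open Matrix
open scoped ComplexOrder

/-! Let `ι_j : H_{T_j} → H` be the isometric inclusion of the `j`-th block. Then
`Π_{T_j} = ι_j ι_jᴴ` and `M_{k,P_i} = ι_{i-1}ᴴ M_k ι_i`. A state supported on `H_{T_i}` is
`ρ = ι_i σ ι_iᴴ` with `σ = ι_iᴴ ρ ι_i` positive semidefinite of the same trace, and cyclicity of
the trace turns `Tr(Π_{T_{i-1}} T(ρ))` into `Tr(A σ)` with `A = Σ_k M_{k,P_i}ᴴ M_{k,P_i}`.
Finally `γ_i • 1 ≤ A ≤ Γ_i • 1` in the Loewner order, and `X ↦ Re Tr(X σ)` is monotone because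
the trace of a product of two positive semidefinite matrices is nonnegative. -/

open scoped MatrixOrder

namespace Matrix

variable {n 𝕜 : Type*} [Fintype n] [RCLike 𝕜]

lemma PosSemidef.trace_mul_nonneg {A B : Matrix n n 𝕜} (hA : A.PosSemidef) (hB : B.PosSemidef) :
    0 ≤ (A * B).trace := by
  classical
  obtain ⟨C, rfl⟩ := CStarAlgebra.nonneg_iff_eq_star_mul_self.mp hA.nonneg
  rw [star_eq_conjTranspose, mul_assoc, trace_mul_comm]
  exact (hB.mul_mul_conjTranspose_same C).trace_nonneg

lemma re_trace_mul_le_re_trace_mul {A B σ : Matrix n n 𝕜} (hAB : A ≤ B) (hσ : σ.PosSemidef) :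
    RCLike.re (A * σ).trace ≤ RCLike.re (B * σ).trace := by
  have := (RCLike.nonneg_iff.mp (PosSemidef.trace_mul_nonneg (le_iff.mp hAB) hσ)).1
  rwa [sub_mul, trace_sub, map_sub, sub_nonneg] at this

variable [DecidableEq n]

lemma re_trace_algebraMap_mul (c : ℝ) (σ : Matrix n n 𝕜) :
    RCLike.re (algebraMap ℝ (Matrix n n 𝕜) c * σ).trace = c * RCLike.re σ.trace := by
  simp [Algebra.algebraMap_eq_smul_one, trace_smul, RCLike.smul_re]

namespace IsHermitian

variable {A : Matrix n n 𝕜} (hA : A.IsHermitian)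
include hA

lemma algebraMap_iInf_eigenvalues_le :
    algebraMap ℝ (Matrix n n 𝕜) (⨅ j, hA.eigenvalues j) ≤ A := by
  rw [algebraMap_le_iff_le_spectrum hA.isSelfAdjoint, hA.spectrum_real_eq_range_eigenvalues]
  rintro _ ⟨j, rfl⟩
  exact ciInf_le (Set.finite_range _).bddBelow j

lemma le_algebraMap_iSup_eigenvalues :
    A ≤ algebraMap ℝ (Matrix n n 𝕜) (⨆ j, hA.eigenvalues j) := by
  rw [le_algebraMap_iff_spectrum_le hA.isSelfAdjoint, hA.spectrum_real_eq_range_eigenvalues]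
  rintro _ ⟨j, rfl⟩
  exact le_ciSup (Set.finite_range _).bddAbove j

lemma iInf_eigenvalues_mul_re_trace_le {σ : Matrix n n 𝕜} (hσ : σ.PosSemidef) :
    (⨅ j, hA.eigenvalues j) * RCLike.re σ.trace ≤ RCLike.re (A * σ).trace := by
  rw [← re_trace_algebraMap_mul]
  exact re_trace_mul_le_re_trace_mul hA.algebraMap_iInf_eigenvalues_le hσ

lemma re_trace_mul_le_iSup_eigenvalues_mul {σ : Matrix n n 𝕜} (hσ : σ.PosSemidef) :
    RCLike.re (A * σ).trace ≤ (⨆ j, hA.eigenvalues j) * RCLike.re σ.trace := by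
  rw [← re_trace_algebraMap_mul]
  exact re_trace_mul_le_re_trace_mul hA.le_algebraMap_iSup_eigenvalues hσ

end IsHermitian

lemma trace_mul_sum_mul_mul_conjTranspose {α ι l m n : Type*} [CommRing α] [StarRing α]
    [Fintype ι] [Fintype l] [Fintype m] [Fintype n]
    (F : Matrix n l α) (E : Matrix n m α) (M : ι → Matrix n n α) (σ : Matrix m m α) :
    (F * Fᴴ * ∑ k, M k * (E * σ * Eᴴ) * (M k)ᴴ).trace =
      ((∑ k, (Fᴴ * M k * E)ᴴ * (Fᴴ * M k * E)) * σ).trace := by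
  simp only [Finset.mul_sum, Finset.sum_mul, trace_sum, conjTranspose_mul,
    conjTranspose_conjTranspose]
  refine Finset.sum_congr rfl fun k _ => ?_
  simp only [← Matrix.mul_assoc]
  rw [trace_mul_cycle, trace_mul_cycle]
  simp only [← Matrix.mul_assoc]

end Matrix

section Chain

variable {N : ℕ} (ds : Fin (N + 1) → ℕ)

noncomputable def blockInclusion (j : Fin (N + 1)) : Matrix (CIdx ds) (Fin (ds j)) ℂ :=
  (1 : Matrix (CIdx ds) (CIdx ds) ℂ).submatrix id (fun q => ⟨j, q⟩)

lemma conjTranspose_blockInclusion_mul_self (j : Fin (N + 1)) :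
    (blockInclusion ds j)ᴴ * blockInclusion ds j = 1 := by
  rw [blockInclusion, conjTranspose_submatrix, conjTranspose_one, ← Equiv.coe_refl,
    one_submatrix_mul]
  simp [submatrix_one _ sigma_mk_injective]

lemma PTj_eq_blockInclusion_mul_conjTranspose (j : Fin (N + 1)) :
    PTj ds j = blockInclusion ds j * (blockInclusion ds j)ᴴ := by
  ext ⟨a, p⟩ y
  rw [PTj, diagonal_apply, mul_apply]
  obtain rfl | ha := eq_or_ne a j
  · rw [Fintype.sum_eq_single p]
    · simp [blockInclusion, one_apply, eq_comm]
    · intro q hq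
      simp [blockInclusion, one_apply, hq.symm]
  · simp [blockInclusion, one_apply, ha]

lemma Pblk_eq_conjTranspose_blockInclusion_mul {K : ℕ}
    (M : Fin K → Matrix (CIdx ds) (CIdx ds) ℂ) (k : Fin K) (i : Fin N) :
    Pblk M k i = (blockInclusion ds i.castSucc)ᴴ * M k * blockInclusion ds i.succ := by
  rw [blockInclusion, blockInclusion, conjTranspose_submatrix, conjTranspose_one,
    ← Equiv.coe_refl, one_submatrix_mul, mul_submatrix_one]
  rfl

end Chain

theorem stmt_16_general {N K : ℕ} {ds : Fin (N + 1) → ℕ}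
    (M : Fin K → Matrix (CIdx ds) (CIdx ds) ℂ)
    (i : Fin N)
    (hA : (∑ k, (Pblk M k i)ᴴ * Pblk M k i).IsHermitian)
    (ρ : Matrix (CIdx ds) (CIdx ds) ℂ)
    (hρ : ρ.PosSemidef)
    (hρsupp : PTj ds i.succ * ρ * PTj ds i.succ = ρ) :
    (⨅ j, hA.eigenvalues j) * ρ.trace.re ≤
        (PTj ds i.castSucc * ∑ k, M k * ρ * (M k)ᴴ).trace.re ∧
      (PTj ds i.castSucc * ∑ k, M k * ρ * (M k)ᴴ).trace.re ≤
        (⨆ j, hA.eigenvalues j) * ρ.trace.re := by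
  set E := blockInclusion ds i.succ with hE
  have hρ_eq : ρ = E * (Eᴴ * ρ * E) * Eᴴ := by
    conv_lhs => rw [← hρsupp, PTj_eq_blockInclusion_mul_conjTranspose, ← hE]
    simp only [Matrix.mul_assoc]
  have htrace : ρ.trace = (Eᴴ * ρ * E).trace := by
    conv_lhs => rw [hρ_eq]
    rw [trace_mul_cycle, conjTranspose_blockInclusion_mul_self, Matrix.one_mul]
  have hrate : (PTj ds i.castSucc * ∑ k, M k * ρ * (M k)ᴴ).trace =
      ((∑ k, (Pblk M k i)ᴴ * Pblk M k i) * (Eᴴ * ρ * E)).trace := by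
    conv_lhs => rw [PTj_eq_blockInclusion_mul_conjTranspose, hρ_eq]
    simp only [trace_mul_sum_mul_mul_conjTranspose, Pblk_eq_conjTranspose_blockInclusion_mul, ← hE]
  have hσ := hρ.conjTranspose_mul_mul_same E
  rw [hrate, htrace]
  exact ⟨hA.iInf_eigenvalues_mul_re_trace_le hσ, hA.re_trace_mul_le_iSup_eigenvalues_mul hσ⟩

/-- Transition-rate bounds for the DID: if `ρ` is a density operator supported on
`H_{T_i}`, then `γ_i Tr(ρ) ≤ Tr(Π_{T_{i-1}} T(ρ)) ≤ Γ_i Tr(ρ)`, where `γ_i` (resp.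
`Γ_i`) is the least (resp. largest) eigenvalue of `Σ_k M_{k,P_i}† M_{k,P_i}`. -/
theorem stmt_16 {N K : ℕ} {ds : Fin (N + 1) → ℕ}
    (M : Fin K → Matrix (CIdx ds) (CIdx ds) ℂ)
    (hTP : ∑ k, (M k)ᴴ * M k = 1)
    (hDID : ∀ k, ∀ x y : CIdx ds,
      ((x.1 : ℕ) + 1 < (y.1 : ℕ) ∨ (0 < (x.1 : ℕ) ∧ (y.1 : ℕ) = 0)) → M k x y = 0)
    (i : Fin N)
    (hA : (∑ k, (Pblk M k i)ᴴ * Pblk M k i).IsHermitian)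
    (ρ : Matrix (CIdx ds) (CIdx ds) ℂ)
    (hρ : ρ.PosSemidef) (hρtr : ρ.trace = 1)
    (hρsupp : PTj ds i.succ * ρ * PTj ds i.succ = ρ) :
    (⨅ j, hA.eigenvalues j) * ρ.trace.re ≤
        (PTj ds i.castSucc * ∑ k, M k * ρ * (M k)ᴴ).trace.re ∧
      (PTj ds i.castSucc * ∑ k, M k * ρ * (M k)ᴴ).trace.re ≤
        (⨆ j, hA.eigenvalues j) * ρ.trace.re :=
  stmt_16_general M i hA ρ hρ hρsupp
end
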